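/- Eckart–Young for rank-1, 2×2 diagonal case: if A = diag(σ₁, σ₂) with σ₁ ≥ σ₂ ≥ 0, then for every matrix B ∈ ℝ^{2×2} of rank at most 1, ‖A − B‖_F ≥ σ₂, with equality attained by B = diag(σ₁, 0). -/
import Mathlib


open Matrix

/-- The Frobenius norm of a real 2×2 matrix. -/
noncomputable def frobNorm (A : Matrix (Fin 2) (Fin 2) ℝ) : ℝ :=
  Real.sqrt (∑ i, ∑ j, (A i j) ^ 2)

lemma ey_key_abs (s1 s2 p q t2 : ℝ) (h12 : s2 ≤ s1) (h2 : 0 ≤ s2)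
    (h1 : p^2 + q^2 + 2*(p*q) ≤ t2) (h2' : p^2 + q^2 - 2*(p*q) ≤ t2) :
    s2^2 ≤ s1^2 - 2*s1*p + t2 + s2^2 - 2*s2*q := by
  rcases le_or_gt p s2 with hp | hp
  · nlinarith [sq_nonneg (q + p - s2), sq_nonneg (q - p + s2),
      mul_nonneg (sub_nonneg.2 h12) (sub_nonneg.2 hp), sq_nonneg (s1 - p)]
  · nlinarith [sq_nonneg (q - s2), sq_nonneg (q + s2), sq_nonneg (s1 - p),
      mul_nonneg h2 (le_of_lt (lt_of_le_of_lt h2 hp))]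

lemma ey_key (s1 s2 a b c d : ℝ) (h12 : s2 ≤ s1) (h2 : 0 ≤ s2) :
    s2^2 ≤ (s1 - a*b)^2 + (a*d)^2 + (c*b)^2 + (s2 - c*d)^2 := by
  have h := ey_key_abs s1 s2 (a*b) (c*d) ((a*b)^2 + (a*d)^2 + (c*b)^2 + (c*d)^2)
    h12 h2 (by nlinarith [sq_nonneg (a*d - c*b)]) (by nlinarith [sq_nonneg (a*d + c*b)])
  nlinarith [h]

/-- Eckart–Young theorem for the rank-1 approximation of a 2×2 diagonal
matrix: ‖diag(σ₁,σ₂) − B‖_F ≥ σ₂ for any matrix B of rank at most 1, with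
equality for B = diag(σ₁, 0). -/
theorem eckart_young_rank_one_two_by_two
    (σ₁ σ₂ : ℝ) (h12 : σ₂ ≤ σ₁) (h2 : 0 ≤ σ₂) :
    (∀ B : Matrix (Fin 2) (Fin 2) ℝ, (∃ u v : Fin 2 → ℝ, B = vecMulVec u v) →
        σ₂ ≤ frobNorm (Matrix.diagonal ![σ₁, σ₂] - B)) ∧
      frobNorm (Matrix.diagonal ![σ₁, σ₂] - Matrix.diagonal ![σ₁, 0]) = σ₂ ∧
      ∃ u v : Fin 2 → ℝ, Matrix.diagonal ![σ₁, 0] = vecMulVec u v := by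
  refine ⟨?_, ?_, ?_⟩
  · rintro B ⟨u, v, rfl⟩
    have key : σ₂^2 ≤ ∑ i, ∑ j, ((Matrix.diagonal ![σ₁, σ₂] - vecMulVec u v) i j)^2 := by
      simp only [Fin.sum_univ_two, Matrix.sub_apply, Matrix.diagonal_apply,
        Matrix.vecMulVec_apply, Matrix.cons_val_zero, Matrix.cons_val_one, Matrix.head_cons,
        if_pos rfl]
      norm_num
      have := ey_key σ₁ σ₂ (u 0) (v 0) (u 1) (v 1) h12 h2
      nlinarith [this]
    calc σ₂ = Real.sqrt (σ₂^2) := (Real.sqrt_sq h2).symm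
      _ ≤ _ := Real.sqrt_le_sqrt key
  · simp only [frobNorm, Fin.sum_univ_two, Matrix.sub_apply, Matrix.diagonal_apply,
      Matrix.cons_val_zero, Matrix.cons_val_one, Matrix.head_cons]
    norm_num
    exact Real.sqrt_sq h2
  · refine ⟨![σ₁, 0], ![1, 0], ?_⟩
    ext i j
    fin_cases i <;> fin_cases j <;>
      simp [Matrix.vecMulVec_apply, Matrix.diagonal_apply]
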